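/- arXiv:1905.12393 — 3 statements merged into one kernel-verified Lean document; each statement's English description precedes it below -/
import Mathlib

section
/- Consider the D1Q2 scheme: given (f⁻_j^n, f⁺_j^n)_{j∈ℤ}, define f^{±,n+1/2}_j = (1−s) f^±_j^n + s h^±(u_j^n) where u_j^n = f⁺_j^n + f⁻_j^n, and then f⁺_j^{n+1} = f^{+,n+1/2}_{j−1}, f⁻_j^{n+1} = f^{−,n+1/2}_{j+1}. Assume s ∈ (0,1], λ ≥ M = max_{[α,β]}|φ'|, initial data u_j^0 ∈ [α,β] and f^±_j^0 = h^±(u_j^0). Then for all n and j: u_j^n ∈ [α,β] and f^±_j^n ∈ [h^±(α), h^±(β)]. -/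
/-- Equilibrium distribution function for velocity `+λ`. -/
noncomputable def hp (lam : ℝ) (flux : ℝ → ℝ) (ξ : ℝ) : ℝ := (lam * ξ + flux ξ) / (2 * lam)

/-- Equilibrium distribution function for velocity `-λ`. -/
noncomputable def hm (lam : ℝ) (flux : ℝ → ℝ) (ξ : ℝ) : ℝ := (lam * ξ - flux ξ) / (2 * lam)

/-! Under the subcharacteristic condition `max |φ'| ≤ λ` both equilibria `h±` are nondecreasing
on `[α, β]`, so they map `[α, β]` into `[h±(α), h±(β)]`. A relaxation step takes a convex
combination of `f±` with `h±(u)` and transport only shifts indices, so these intervals are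
invariant; since `h⁺ + h⁻ = id`, the bounds on `f±` add up to `u ∈ [α, β]`. -/

open Set

theorem monotoneOn_const_mul_add_of_abs_deriv_le {f : ℝ → ℝ} {D : Set ℝ} {c : ℝ}
    (hD : Convex ℝ D) (hf : DifferentiableOn ℝ f D) (hderiv : ∀ x ∈ D, |deriv f x| ≤ c) :
    MonotoneOn (fun x => c * x + f x) D := by
  refine monotoneOn_of_deriv_nonneg hD ((continuousOn_const.mul continuousOn_id).add hf.continuousOn)
    (((differentiableOn_const c).mul differentiableOn_id).add (hf.mono interior_subset))
    fun x hx => ?_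
  have hfx : DifferentiableAt ℝ f x := hf.differentiableAt (mem_interior_iff_mem_nhds.mp hx)
  have hhas : HasDerivAt (fun y => c * y + f y) (c * 1 + deriv f x) x :=
    ((hasDerivAt_id' x).const_mul c).add hfx.hasDerivAt
  rw [hhas.deriv, mul_one]
  linarith [neg_abs_le (deriv f x), hderiv x (interior_subset hx)]

theorem hp_monotoneOn {lam : ℝ} {flux : ℝ → ℝ} {D : Set ℝ} (hlam : 0 < lam) (hD : Convex ℝ D)
    (hflux : DifferentiableOn ℝ flux D) (hderiv : ∀ x ∈ D, |deriv flux x| ≤ lam) :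
    MonotoneOn (hp lam flux) D := fun _ ha _ hb hab =>
  div_le_div_of_nonneg_right (monotoneOn_const_mul_add_of_abs_deriv_le hD hflux hderiv ha hb hab)
    (by positivity)

theorem hm_eq_hp_neg (lam : ℝ) (flux : ℝ → ℝ) : hm lam flux = hp lam (-flux) := by
  funext ξ
  simp only [hm, hp, Pi.neg_apply, sub_eq_add_neg]

theorem hm_monotoneOn {lam : ℝ} {flux : ℝ → ℝ} {D : Set ℝ} (hlam : 0 < lam) (hD : Convex ℝ D)
    (hflux : DifferentiableOn ℝ flux D) (hderiv : ∀ x ∈ D, |deriv flux x| ≤ lam) :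
    MonotoneOn (hm lam flux) D := by
  rw [hm_eq_hp_neg]
  exact hp_monotoneOn hlam hD hflux.neg fun x hx => by
    rw [deriv.neg, abs_neg]
    exact hderiv x hx

theorem hp_add_hm {lam : ℝ} (hlam : lam ≠ 0) (flux : ℝ → ℝ) (ξ : ℝ) :
    hp lam flux ξ + hm lam flux ξ = ξ := by
  simp only [hp, hm]
  field_simp
  ring

theorem add_mem_Icc_of_mem_Icc_hp_hm {lam : ℝ} (hlam : lam ≠ 0) {flux : ℝ → ℝ} {α β a b : ℝ}
    (ha : a ∈ Icc (hp lam flux α) (hp lam flux β)) (hb : b ∈ Icc (hm lam flux α) (hm lam flux β)) :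
    a + b ∈ Icc α β := by
  have hab := Icc_add_Icc_subset _ _ _ _ (add_mem_add ha hb)
  rwa [hp_add_hm hlam, hp_add_hm hlam] at hab

theorem stmt3_general (flux : ℝ → ℝ) (hflux : ContDiff ℝ 1 flux)
    (α β M lam s : ℝ) (hlampos : 0 < lam)
    (hs : s ∈ Set.Ioc (0 : ℝ) 1)
    (hM : ∀ ξ ∈ Set.Icc α β, |deriv flux ξ| ≤ M) (hlam : M ≤ lam)
    (fp fm u : ℕ → ℤ → ℝ)
    (hu : ∀ n j, u n j = fp n j + fm n j)
    (hrecp : ∀ n j, fp (n + 1) j = (1 - s) * fp n (j - 1) + s * hp lam flux (u n (j - 1)))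
    (hrecm : ∀ n j, fm (n + 1) j = (1 - s) * fm n (j + 1) + s * hm lam flux (u n (j + 1)))
    (hinit : ∀ j, u 0 j ∈ Set.Icc α β)
    (hinitp : ∀ j, fp 0 j = hp lam flux (u 0 j))
    (hinitm : ∀ j, fm 0 j = hm lam flux (u 0 j)) :
    ∀ n j, u n j ∈ Set.Icc α β ∧
      fp n j ∈ Set.Icc (hp lam flux α) (hp lam flux β) ∧
      fm n j ∈ Set.Icc (hm lam flux α) (hm lam flux β) := by
  have hdiff := (hflux.differentiable one_ne_zero).differentiableOn (s := Icc α β)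
  have hderiv : ∀ ξ ∈ Icc α β, |deriv flux ξ| ≤ lam := fun ξ hξ => (hM ξ hξ).trans hlam
  have hp_maps := (hp_monotoneOn hlampos (convex_Icc α β) hdiff hderiv).mapsTo_Icc
  have hm_maps := (hm_monotoneOn hlampos (convex_Icc α β) hdiff hderiv).mapsTo_Icc
  have relax : ∀ {A B a b : ℝ}, a ∈ Icc A B → b ∈ Icc A B → (1 - s) * a + s * b ∈ Icc A B :=
    fun ha hb => convex_Icc _ _ ha hb (sub_nonneg.2 hs.2) hs.1.le (by ring)
  have hu_mem : ∀ n j, fp n j ∈ Icc (hp lam flux α) (hp lam flux β) →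
      fm n j ∈ Icc (hm lam flux α) (hm lam flux β) → u n j ∈ Icc α β := fun n j hfp hfm => by
    rw [hu]
    exact add_mem_Icc_of_mem_Icc_hp_hm hlampos.ne' hfp hfm
  have hf : ∀ n j, fp n j ∈ Icc (hp lam flux α) (hp lam flux β) ∧
      fm n j ∈ Icc (hm lam flux α) (hm lam flux β) := by
    intro n
    induction n with
    | zero =>
      intro j
      rw [hinitp, hinitm]
      exact ⟨hp_maps (hinit j), hm_maps (hinit j)⟩
    | succ n ih =>
      intro j
      rw [hrecp, hrecm]
      exact ⟨relax (ih _).1 (hp_maps (hu_mem _ _ (ih _).1 (ih _).2)),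
        relax (ih _).2 (hm_maps (hu_mem _ _ (ih _).1 (ih _).2))⟩
  exact fun n j => ⟨hu_mem n j (hf n j).1 (hf n j).2, hf n j⟩

/-- Maximum principle for the D1Q2 scheme. -/
theorem stmt3 (flux : ℝ → ℝ) (hflux : ContDiff ℝ 1 flux)
    (α β M lam s : ℝ) (hαβ : α ≤ β) (hlampos : 0 < lam)
    (hs : s ∈ Set.Ioc (0 : ℝ) 1)
    (hM : ∀ ξ ∈ Set.Icc α β, |deriv flux ξ| ≤ M) (hlam : M ≤ lam)
    (fp fm u : ℕ → ℤ → ℝ)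
    (hu : ∀ n j, u n j = fp n j + fm n j)
    (hrecp : ∀ n j, fp (n + 1) j = (1 - s) * fp n (j - 1) + s * hp lam flux (u n (j - 1)))
    (hrecm : ∀ n j, fm (n + 1) j = (1 - s) * fm n (j + 1) + s * hm lam flux (u n (j + 1)))
    (hinit : ∀ j, u 0 j ∈ Set.Icc α β)
    (hinitp : ∀ j, fp 0 j = hp lam flux (u 0 j))
    (hinitm : ∀ j, fm 0 j = hm lam flux (u 0 j)) :
    ∀ n j, u n j ∈ Set.Icc α β ∧
      fp n j ∈ Set.Icc (hp lam flux α) (hp lam flux β) ∧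
      fm n j ∈ Set.Icc (hm lam flux α) (hm lam flux β) :=
  stmt3_general flux hflux α β M lam s hlampos hs hM hlam fp fm u hu hrecp hrecm hinit hinitp hinitm
end

section
/- Under the D1Q2 scheme with s ∈ (0,1], λ ≥ M, and equilibrium initial data v_j^0 = φ(u_j^0), the discrete equilibrium gap satisfies Δx ∑_{j∈ℤ} |φ(u_j^n) − v_j^n| ≤ (2λΔx/s) TV(u^0) for all n ∈ ℕ. -/
/-!
In the kinetic variables `f± = (λu ± v)/2` one step of the scheme relaxes `f±` towards the
Maxwellians `M±(u) = (λu ± φ(u))/2` with weight `s`, then transports the relaxed `g+` one cell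
to the right and `g-` one cell to the left. Since `|φ'| ≤ λ`, both `M±` are nondecreasing on
`[α, β]`; hence the box `f± ∈ [M±(α), M±(β)]` is invariant (so `u` stays in `[α, β]`) and
`TV f+ + TV f-` does not increase, so it stays below its initial value `λ TV(u⁰)`.
The gap `φ(u) - v = 2(M+(u) - f+) = 2(f- - M-(u))` is multiplied by `1 - s` in the relaxation,
and the transport adds a Maxwellian increment controlled by the total variation of `g∓`.
Summing over cells gives `G(n+1) ≤ (1 - s) G(n) + 2λ TV(u⁰)` for the gap sum `G(n)`,
and `G(0) = 0`.
-/

/-- Sequential total variation of a sequence indexed by `ℤ`. -/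
noncomputable def tvSeq (w : ℤ → ℝ) : ENNReal := ∑' j : ℤ, ENNReal.ofReal |w (j + 1) - w j|

open Set

theorem abs_sub_add_abs_sub_of_monotoneOn {α β : Type*} [LinearOrder α] [AddCommGroup β]
    [LinearOrder β] [IsOrderedAddMonoid β] {f g : α → β} {S : Set α}
    (hf : MonotoneOn f S) (hg : MonotoneOn g S) {a b : α} (ha : a ∈ S) (hb : b ∈ S) :
    |f b - f a| + |g b - g a| = |f b + g b - (f a + g a)| := by
  rw [add_sub_add_comm, eq_comm, abs_add_eq_add_abs_iff]
  rcases le_total a b with hab | hab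
  · exact Or.inl ⟨sub_nonneg.2 (hf ha hb hab), sub_nonneg.2 (hg ha hb hab)⟩
  · exact Or.inr ⟨sub_nonpos.2 (hf hb ha hab), sub_nonpos.2 (hg hb ha hab)⟩

theorem abs_convex_comb_add_abs_convex_comb_le {s p m p' m' : ℝ} (hs0 : 0 ≤ s) (hs1 : s ≤ 1)
    (h : |p'| + |m'| ≤ |p + m|) :
    |(1 - s) * p + s * p'| + |(1 - s) * m + s * m'| ≤ |p| + |m| := by
  have hp := abs_add_le ((1 - s) * p) (s * p')
  have hm := abs_add_le ((1 - s) * m) (s * m')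
  rw [abs_mul, abs_mul, abs_of_nonneg (sub_nonneg.2 hs1), abs_of_nonneg hs0] at hp hm
  linarith [mul_le_mul_of_nonneg_left h hs0, mul_le_mul_of_nonneg_left (abs_add_le p m) hs0]

theorem tvSeq_comp_add_right (f : ℤ → ℝ) (k : ℤ) : tvSeq (fun j => f (j + k)) = tvSeq f :=
  (tsum_congr fun j => by simp only [Equiv.coe_addRight, add_right_comm]).trans
    ((Equiv.addRight k).tsum_eq fun j => ENNReal.ofReal |f (j + 1) - f j|)

theorem tvSeq_add_tvSeq (f g : ℤ → ℝ) : tvSeq f + tvSeq g =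
    ∑' j, ENNReal.ofReal (|f (j + 1) - f j| + |g (j + 1) - g j|) := by
  simp only [tvSeq, ← ENNReal.tsum_add,
    ENNReal.ofReal_add (abs_nonneg _) (abs_nonneg _)]

theorem tsum_ofReal_abs_sub_le_two_mul_tvSeq (f : ℤ → ℝ) :
    ∑' j, ENNReal.ofReal |f (j + 1) - f (j - 1)| ≤ 2 * tvSeq f :=
  calc ∑' j, ENNReal.ofReal |f (j + 1) - f (j - 1)|
      ≤ ∑' j, (ENNReal.ofReal |f (j + 1) - f j| + ENNReal.ofReal |f (j - 1 + 1) - f (j - 1)|) :=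
        ENNReal.tsum_le_tsum fun j => by
          rw [sub_add_cancel, ← ENNReal.ofReal_add (abs_nonneg _) (abs_nonneg _)]
          exact ENNReal.ofReal_le_ofReal (abs_sub_le _ _ _)
    _ = 2 * tvSeq f := by
        rw [ENNReal.tsum_add, two_mul]
        exact congrArg (tvSeq f + ·)
          ((Equiv.subRight (1 : ℤ)).tsum_eq fun j => ENNReal.ofReal |f (j + 1) - f j|)

noncomputable section

namespace D1Q2

section Maxwellians

variable (φ : ℝ → ℝ) (lam : ℝ)

def maxwellPlus (x : ℝ) : ℝ := (lam * x + φ x) / 2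

def maxwellMinus (x : ℝ) : ℝ := (lam * x - φ x) / 2

theorem maxwellPlus_add_maxwellMinus (x : ℝ) :
    maxwellPlus φ lam x + maxwellMinus φ lam x = lam * x := by
  unfold maxwellPlus maxwellMinus; ring

variable {φ lam} {S : Set ℝ}

theorem monotoneOn_maxwellPlus (hLip : ∀ a ∈ S, ∀ b ∈ S, |φ b - φ a| ≤ lam * |b - a|) :
    MonotoneOn (maxwellPlus φ lam) S := by
  intro a ha b hb hab
  have h := hLip a ha b hb
  rw [abs_of_nonneg (sub_nonneg.2 hab)] at h
  have := neg_abs_le (φ b - φ a)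
  unfold maxwellPlus; linarith

theorem monotoneOn_maxwellMinus (hLip : ∀ a ∈ S, ∀ b ∈ S, |φ b - φ a| ≤ lam * |b - a|) :
    MonotoneOn (maxwellMinus φ lam) S := by
  intro a ha b hb hab
  have h := hLip a ha b hb
  rw [abs_of_nonneg (sub_nonneg.2 hab)] at h
  have := le_abs_self (φ b - φ a)
  unfold maxwellMinus; linarith

theorem abs_maxwellPlus_sub_add_abs_maxwellMinus_sub
    (hLip : ∀ a ∈ S, ∀ b ∈ S, |φ b - φ a| ≤ lam * |b - a|) (hlam : 0 ≤ lam)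
    {a b : ℝ} (ha : a ∈ S) (hb : b ∈ S) :
    |maxwellPlus φ lam b - maxwellPlus φ lam a| + |maxwellMinus φ lam b - maxwellMinus φ lam a|
      = lam * |b - a| := by
  rw [abs_sub_add_abs_sub_of_monotoneOn (monotoneOn_maxwellPlus hLip)
    (monotoneOn_maxwellMinus hLip) ha hb, maxwellPlus_add_maxwellMinus,
    maxwellPlus_add_maxwellMinus, ← mul_sub, abs_mul, abs_of_nonneg hlam]

theorem abs_maxwellPlus_sub_le (hLip : ∀ a ∈ S, ∀ b ∈ S, |φ b - φ a| ≤ lam * |b - a|)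
    (hlam : 0 ≤ lam) {a b : ℝ} (ha : a ∈ S) (hb : b ∈ S) :
    |maxwellPlus φ lam b - maxwellPlus φ lam a| ≤ lam * |b - a| := by
  rw [← abs_maxwellPlus_sub_add_abs_maxwellMinus_sub hLip hlam ha hb]
  exact le_add_of_nonneg_right (abs_nonneg _)

theorem abs_maxwellMinus_sub_le (hLip : ∀ a ∈ S, ∀ b ∈ S, |φ b - φ a| ≤ lam * |b - a|)
    (hlam : 0 ≤ lam) {a b : ℝ} (ha : a ∈ S) (hb : b ∈ S) :
    |maxwellMinus φ lam b - maxwellMinus φ lam a| ≤ lam * |b - a| := by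
  rw [← abs_maxwellPlus_sub_add_abs_maxwellMinus_sub hLip hlam ha hb]
  exact le_add_of_nonneg_left (abs_nonneg _)

end Maxwellians

section Scheme

variable (φ : ℝ → ℝ) (lam s : ℝ)

/-- The relaxed moment `v^{n+1/2}`. -/
def relaxV (u v : ℤ → ℝ) (j : ℤ) : ℝ := (1 - s) * v j + s * φ (u j)

def stepU (u v : ℤ → ℝ) (j : ℤ) : ℝ :=
  (1 / 2) * (u (j + 1) + u (j - 1))
    - (1 / (2 * lam)) * (relaxV φ s u v (j + 1) - relaxV φ s u v (j - 1))

def stepV (u v : ℤ → ℝ) (j : ℤ) : ℝ :=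
  (1 / 2) * (relaxV φ s u v (j + 1) + relaxV φ s u v (j - 1))
    - (lam / 2) * (u (j + 1) - u (j - 1))

def kinPlus (u v : ℤ → ℝ) (j : ℤ) : ℝ := (lam * u j + v j) / 2

def kinMinus (u v : ℤ → ℝ) (j : ℤ) : ℝ := (lam * u j - v j) / 2

variable {φ lam s}

theorem kinPlus_add_kinMinus (u v : ℤ → ℝ) (j : ℤ) :
    kinPlus lam u v j + kinMinus lam u v j = lam * u j := by
  unfold kinPlus kinMinus; ring

theorem kinPlus_relaxV (u v : ℤ → ℝ) (j : ℤ) :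
    kinPlus lam u (relaxV φ s u v) j
      = (1 - s) * kinPlus lam u v j + s * maxwellPlus φ lam (u j) := by
  unfold kinPlus relaxV maxwellPlus; ring

theorem kinMinus_relaxV (u v : ℤ → ℝ) (j : ℤ) :
    kinMinus lam u (relaxV φ s u v) j
      = (1 - s) * kinMinus lam u v j + s * maxwellMinus φ lam (u j) := by
  unfold kinMinus relaxV maxwellMinus; ring

theorem kinPlus_step (hlam : lam ≠ 0) (u v : ℤ → ℝ) (j : ℤ) :
    kinPlus lam (stepU φ lam s u v) (stepV φ lam s u v) j
      = kinPlus lam u (relaxV φ s u v) (j - 1) := by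
  unfold kinPlus stepU stepV; field_simp; ring

theorem kinMinus_step (hlam : lam ≠ 0) (u v : ℤ → ℝ) (j : ℤ) :
    kinMinus lam (stepU φ lam s u v) (stepV φ lam s u v) j
      = kinMinus lam u (relaxV φ s u v) (j + 1) := by
  unfold kinMinus stepU stepV; field_simp; ring

theorem sub_eq_two_mul_maxwellPlus_sub_kinPlus (u v : ℤ → ℝ) (j : ℤ) :
    φ (u j) - v j = 2 * (maxwellPlus φ lam (u j) - kinPlus lam u v j) := by
  unfold maxwellPlus kinPlus; ring

theorem sub_eq_two_mul_kinMinus_sub_maxwellMinus (u v : ℤ → ℝ) (j : ℤ) :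
    φ (u j) - v j = 2 * (kinMinus lam u v j - maxwellMinus φ lam (u j)) := by
  unfold maxwellMinus kinMinus; ring

theorem sub_relaxV (u v : ℤ → ℝ) (j : ℤ) :
    φ (u j) - relaxV φ s u v j = (1 - s) * (φ (u j) - v j) := by
  unfold relaxV; ring

variable (φ lam) in
def KinBox (α β : ℝ) (u v : ℤ → ℝ) : Prop :=
  ∀ j, kinPlus lam u v j ∈ Icc (maxwellPlus φ lam α) (maxwellPlus φ lam β) ∧
    kinMinus lam u v j ∈ Icc (maxwellMinus φ lam α) (maxwellMinus φ lam β)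

variable {α β : ℝ} {u v : ℤ → ℝ}

theorem mem_Icc_of_kinBox (hlam : 0 < lam) (h : KinBox φ lam α β u v) (j : ℤ) :
    u j ∈ Icc α β := by
  obtain ⟨⟨hp₁, hp₂⟩, hm₁, hm₂⟩ := h j
  have hu := kinPlus_add_kinMinus (lam := lam) u v j
  have hα := maxwellPlus_add_maxwellMinus φ lam α
  have hβ := maxwellPlus_add_maxwellMinus φ lam β
  exact ⟨le_of_mul_le_mul_left (by linarith) hlam, le_of_mul_le_mul_left (by linarith) hlam⟩

theorem kinBox_equilibrium
    (hLip : ∀ a ∈ Icc α β, ∀ b ∈ Icc α β, |φ b - φ a| ≤ lam * |b - a|)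
    (hu : ∀ j, u j ∈ Icc α β) : KinBox φ lam α β u (fun j => φ (u j)) := fun j =>
  ⟨(monotoneOn_maxwellPlus hLip).mapsTo_Icc (hu j),
    (monotoneOn_maxwellMinus hLip).mapsTo_Icc (hu j)⟩

theorem kinBox_step
    (hLip : ∀ a ∈ Icc α β, ∀ b ∈ Icc α β, |φ b - φ a| ≤ lam * |b - a|)
    (hlam : 0 < lam) (hs0 : 0 ≤ s) (hs1 : s ≤ 1) (h : KinBox φ lam α β u v) :
    KinBox φ lam α β (stepU φ lam s u v) (stepV φ lam s u v) := by
  have hu := mem_Icc_of_kinBox hlam h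
  have hcomb : ∀ {a b x y : ℝ}, x ∈ Icc a b → y ∈ Icc a b →
      (1 - s) * x + s * y ∈ Icc a b :=
    fun hx hy => by
      simpa only [smul_eq_mul] using
        convex_Icc _ _ hx hy (sub_nonneg.2 hs1) hs0 (sub_add_cancel 1 s)
  intro j
  rw [kinPlus_step hlam.ne', kinMinus_step hlam.ne', kinPlus_relaxV, kinMinus_relaxV]
  exact ⟨hcomb (h (j - 1)).1 ((monotoneOn_maxwellPlus hLip).mapsTo_Icc (hu (j - 1))),
    hcomb (h (j + 1)).2 ((monotoneOn_maxwellMinus hLip).mapsTo_Icc (hu (j + 1)))⟩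

variable (lam) in
def kinTV (u v : ℤ → ℝ) : ENNReal := tvSeq (kinPlus lam u v) + tvSeq (kinMinus lam u v)

theorem kinTV_equilibrium
    (hLip : ∀ a ∈ Icc α β, ∀ b ∈ Icc α β, |φ b - φ a| ≤ lam * |b - a|)
    (hlam : 0 ≤ lam) (hu : ∀ j, u j ∈ Icc α β) :
    kinTV lam u (fun j => φ (u j)) = ENNReal.ofReal lam * tvSeq u := by
  rw [kinTV, tvSeq_add_tvSeq, tvSeq, ← ENNReal.tsum_mul_left]
  refine tsum_congr fun j => ?_
  rw [← ENNReal.ofReal_mul hlam]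
  exact congrArg ENNReal.ofReal
    (abs_maxwellPlus_sub_add_abs_maxwellMinus_sub hLip hlam (hu j) (hu (j + 1)))

theorem kinTV_relaxV_le
    (hLip : ∀ a ∈ Icc α β, ∀ b ∈ Icc α β, |φ b - φ a| ≤ lam * |b - a|)
    (hlam : 0 ≤ lam) (hs0 : 0 ≤ s) (hs1 : s ≤ 1) (hu : ∀ j, u j ∈ Icc α β) :
    kinTV lam u (relaxV φ s u v) ≤ kinTV lam u v := by
  rw [kinTV, kinTV, tvSeq_add_tvSeq, tvSeq_add_tvSeq]
  refine ENNReal.tsum_le_tsum fun j => ENNReal.ofReal_le_ofReal ?_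
  set fp := kinPlus lam u v
  set fm := kinMinus lam u v
  have hsum : fp (j + 1) - fp j + (fm (j + 1) - fm j) = lam * (u (j + 1) - u j) := by
    linear_combination kinPlus_add_kinMinus (lam := lam) u v (j + 1)
      - kinPlus_add_kinMinus (lam := lam) u v j
  have hmax : |maxwellPlus φ lam (u (j + 1)) - maxwellPlus φ lam (u j)|
      + |maxwellMinus φ lam (u (j + 1)) - maxwellMinus φ lam (u j)|
      ≤ |fp (j + 1) - fp j + (fm (j + 1) - fm j)| := by
    rw [hsum, abs_mul, abs_of_nonneg hlam]
    exact (abs_maxwellPlus_sub_add_abs_maxwellMinus_sub hLip hlam (hu j) (hu (j + 1))).le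
  convert abs_convex_comb_add_abs_convex_comb_le hs0 hs1 hmax using 3 <;>
    simp only [kinPlus_relaxV, kinMinus_relaxV] <;> ring

theorem kinTV_step (hlam : lam ≠ 0) (u v : ℤ → ℝ) :
    kinTV lam (stepU φ lam s u v) (stepV φ lam s u v) = kinTV lam u (relaxV φ s u v) := by
  have hp : kinPlus lam (stepU φ lam s u v) (stepV φ lam s u v)
      = fun j => kinPlus lam u (relaxV φ s u v) (j + -1) :=
    funext fun j => by rw [kinPlus_step hlam, sub_eq_add_neg]
  have hm : kinMinus lam (stepU φ lam s u v) (stepV φ lam s u v)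
      = fun j => kinMinus lam u (relaxV φ s u v) (j + 1) :=
    funext (kinMinus_step hlam u v)
  rw [kinTV, kinTV, hp, hm, tvSeq_comp_add_right, tvSeq_comp_add_right]

variable (φ) in
def gapSum (u v : ℤ → ℝ) : ENNReal := ∑' j, ENNReal.ofReal |φ (u j) - v j|

theorem gap_stepV_eq_left (hlam : lam ≠ 0) (u v : ℤ → ℝ) (j : ℤ) :
    φ (stepU φ lam s u v j) - stepV φ lam s u v j
      = 2 * (maxwellPlus φ lam (stepU φ lam s u v j) - maxwellPlus φ lam (u (j - 1)))
        + (1 - s) * (φ (u (j - 1)) - v (j - 1)) := by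
  linear_combination
    sub_eq_two_mul_maxwellPlus_sub_kinPlus (φ := φ) (lam := lam) (stepU φ lam s u v)
      (stepV φ lam s u v) j
    - 2 * kinPlus_step (φ := φ) (s := s) hlam u v j
    + sub_relaxV (φ := φ) (s := s) u v (j - 1)
    - sub_eq_two_mul_maxwellPlus_sub_kinPlus (φ := φ) (lam := lam) u (relaxV φ s u v) (j - 1)

theorem gap_stepV_eq_right (hlam : lam ≠ 0) (u v : ℤ → ℝ) (j : ℤ) :
    φ (stepU φ lam s u v j) - stepV φ lam s u v j
      = 2 * (maxwellMinus φ lam (u (j + 1)) - maxwellMinus φ lam (stepU φ lam s u v j))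
        + (1 - s) * (φ (u (j + 1)) - v (j + 1)) := by
  linear_combination
    sub_eq_two_mul_kinMinus_sub_maxwellMinus (φ := φ) (lam := lam) (stepU φ lam s u v)
      (stepV φ lam s u v) j
    + 2 * kinMinus_step (φ := φ) (s := s) hlam u v j
    + sub_relaxV (φ := φ) (s := s) u v (j + 1)
    - sub_eq_two_mul_kinMinus_sub_maxwellMinus (φ := φ) (lam := lam) u (relaxV φ s u v) (j + 1)

theorem mul_stepU_sub_left (hlam : lam ≠ 0) (u v : ℤ → ℝ) (j : ℤ) :
    lam * (stepU φ lam s u v j - u (j - 1))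
      = kinMinus lam u (relaxV φ s u v) (j + 1) - kinMinus lam u (relaxV φ s u v) (j - 1) := by
  linear_combination
    kinPlus_step (φ := φ) (s := s) hlam u v j + kinMinus_step (φ := φ) (s := s) hlam u v j
    - kinPlus_add_kinMinus (lam := lam) (stepU φ lam s u v) (stepV φ lam s u v) j
    + kinPlus_add_kinMinus (lam := lam) u (relaxV φ s u v) (j - 1)

theorem mul_sub_stepU_right (hlam : lam ≠ 0) (u v : ℤ → ℝ) (j : ℤ) :
    lam * (u (j + 1) - stepU φ lam s u v j)
      = kinPlus lam u (relaxV φ s u v) (j + 1) - kinPlus lam u (relaxV φ s u v) (j - 1) := by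
  linear_combination
    kinPlus_add_kinMinus (lam := lam) (stepU φ lam s u v) (stepV φ lam s u v) j
    - kinPlus_step (φ := φ) (s := s) hlam u v j - kinMinus_step (φ := φ) (s := s) hlam u v j
    - kinPlus_add_kinMinus (lam := lam) u (relaxV φ s u v) (j + 1)

variable {S : Set ℝ}

theorem abs_gap_stepV_le_left (hLip : ∀ a ∈ S, ∀ b ∈ S, |φ b - φ a| ≤ lam * |b - a|)
    (hlam : 0 < lam) (hs1 : s ≤ 1) {u v : ℤ → ℝ} {j : ℤ} (hu : u (j - 1) ∈ S)
    (hu' : stepU φ lam s u v j ∈ S) :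
    |φ (stepU φ lam s u v j) - stepV φ lam s u v j|
      ≤ (1 - s) * |φ (u (j - 1)) - v (j - 1)|
        + 2 * |kinMinus lam u (relaxV φ s u v) (j + 1)
          - kinMinus lam u (relaxV φ s u v) (j - 1)| := by
  have hΔ := abs_maxwellPlus_sub_le hLip hlam.le hu hu'
  have hG : lam * |stepU φ lam s u v j - u (j - 1)|
      = |kinMinus lam u (relaxV φ s u v) (j + 1) - kinMinus lam u (relaxV φ s u v) (j - 1)| := by
    rw [← mul_stepU_sub_left hlam.ne', abs_mul, abs_of_pos hlam]
  have := abs_add_le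
    (2 * (maxwellPlus φ lam (stepU φ lam s u v j) - maxwellPlus φ lam (u (j - 1))))
    ((1 - s) * (φ (u (j - 1)) - v (j - 1)))
  rw [abs_mul, abs_mul, abs_two, abs_of_nonneg (sub_nonneg.2 hs1)] at this
  rw [gap_stepV_eq_left hlam.ne']
  linarith

theorem abs_gap_stepV_le_right (hLip : ∀ a ∈ S, ∀ b ∈ S, |φ b - φ a| ≤ lam * |b - a|)
    (hlam : 0 < lam) (hs1 : s ≤ 1) {u v : ℤ → ℝ} {j : ℤ} (hu : u (j + 1) ∈ S)
    (hu' : stepU φ lam s u v j ∈ S) :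
    |φ (stepU φ lam s u v j) - stepV φ lam s u v j|
      ≤ (1 - s) * |φ (u (j + 1)) - v (j + 1)|
        + 2 * |kinPlus lam u (relaxV φ s u v) (j + 1)
          - kinPlus lam u (relaxV φ s u v) (j - 1)| := by
  have hΔ := abs_maxwellMinus_sub_le hLip hlam.le hu' hu
  have hG : lam * |u (j + 1) - stepU φ lam s u v j|
      = |kinPlus lam u (relaxV φ s u v) (j + 1) - kinPlus lam u (relaxV φ s u v) (j - 1)| := by
    rw [← mul_sub_stepU_right hlam.ne', abs_mul, abs_of_pos hlam]
  have := abs_add_le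
    (2 * (maxwellMinus φ lam (u (j + 1)) - maxwellMinus φ lam (stepU φ lam s u v j)))
    ((1 - s) * (φ (u (j + 1)) - v (j + 1)))
  rw [abs_mul, abs_mul, abs_two, abs_of_nonneg (sub_nonneg.2 hs1)] at this
  rw [gap_stepV_eq_right hlam.ne']
  linarith

theorem gapSum_step_le (hLip : ∀ a ∈ S, ∀ b ∈ S, |φ b - φ a| ≤ lam * |b - a|)
    (hlam : 0 < lam) (hs1 : s ≤ 1) {u v : ℤ → ℝ} (hu : ∀ j, u j ∈ S)
    (hu' : ∀ j, stepU φ lam s u v j ∈ S) :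
    gapSum φ (stepU φ lam s u v) (stepV φ lam s u v)
      ≤ ENNReal.ofReal (1 - s) * gapSum φ u v + 2 * kinTV lam u (relaxV φ s u v) := by
  set e : ℤ → ENNReal := fun j => ENNReal.ofReal |φ (u j) - v j|
  set gp := kinPlus lam u (relaxV φ s u v)
  set gm := kinMinus lam u (relaxV φ s u v)
  set c := ENNReal.ofReal ((1 - s) / 2)
  have hc : 0 ≤ (1 - s) / 2 := by linarith
  have hpt : ∀ j, ENNReal.ofReal |φ (stepU φ lam s u v j) - stepV φ lam s u v j|
      ≤ c * e (j - 1) + c * e (j + 1) + ENNReal.ofReal |gp (j + 1) - gp (j - 1)|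
        + ENNReal.ofReal |gm (j + 1) - gm (j - 1)| := fun j => by
    -- average the two one-sided estimates, so that both `gp` and `gm` enter with weight one
    have hl := abs_gap_stepV_le_left hLip hlam hs1 (hu (j - 1)) (hu' j)
    have hr := abs_gap_stepV_le_right hLip hlam hs1 (hu (j + 1)) (hu' j)
    calc _ ≤ ENNReal.ofReal ((1 - s) / 2 * |φ (u (j - 1)) - v (j - 1)|
            + (1 - s) / 2 * |φ (u (j + 1)) - v (j + 1)|
            + |gp (j + 1) - gp (j - 1)| + |gm (j + 1) - gm (j - 1)|) :=
          ENNReal.ofReal_le_ofReal (by linarith)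
      _ ≤ _ := by
        refine ENNReal.ofReal_add_le.trans (add_le_add_left (ENNReal.ofReal_add_le.trans
          (add_le_add_left (ENNReal.ofReal_add_le.trans_eq ?_) _)) _)
        rw [ENNReal.ofReal_mul hc, ENNReal.ofReal_mul hc]
  have hshift_sub : ∑' j, e (j - 1) = gapSum φ u v := (Equiv.subRight (1 : ℤ)).tsum_eq e
  have hshift_add : ∑' j, e (j + 1) = gapSum φ u v := (Equiv.addRight (1 : ℤ)).tsum_eq e
  calc _ ≤ ∑' j, (c * e (j - 1) + c * e (j + 1) + ENNReal.ofReal |gp (j + 1) - gp (j - 1)|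
          + ENNReal.ofReal |gm (j + 1) - gm (j - 1)|) := ENNReal.tsum_le_tsum hpt
    _ = c * gapSum φ u v + c * gapSum φ u v + ∑' j, ENNReal.ofReal |gp (j + 1) - gp (j - 1)|
          + ∑' j, ENNReal.ofReal |gm (j + 1) - gm (j - 1)| := by
        simp only [ENNReal.tsum_add, ENNReal.tsum_mul_left, hshift_sub, hshift_add]
    _ ≤ c * gapSum φ u v + c * gapSum φ u v + 2 * tvSeq gp + 2 * tvSeq gm := by
        gcongr <;> exact tsum_ofReal_abs_sub_le_two_mul_tvSeq _
    _ = _ := by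
        rw [kinTV, mul_add, ← add_mul, ← ENNReal.ofReal_add hc hc, add_halves, add_assoc]

theorem ofReal_one_sub_mul_add_two_mul_eq (hlam : 0 ≤ lam) (hs0 : 0 < s) (hs1 : s ≤ 1) :
    ENNReal.ofReal (1 - s) * ENNReal.ofReal (2 * lam / s) + 2 * ENNReal.ofReal lam
      = ENNReal.ofReal (2 * lam / s) := by
  rw [← ENNReal.ofReal_mul (sub_nonneg.2 hs1), ← ENNReal.ofReal_ofNat 2,
    ← ENNReal.ofReal_mul zero_le_two, ← ENNReal.ofReal_add (by positivity) (by positivity)]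
  congr 1
  field_simp
  ring

theorem gapSum_le {α β : ℝ}
    (hLip : ∀ a ∈ Icc α β, ∀ b ∈ Icc α β, |φ b - φ a| ≤ lam * |b - a|)
    (hlam : 0 < lam) (hs : s ∈ Ioc 0 1) {u v : ℕ → ℤ → ℝ}
    (hu : ∀ n, u (n + 1) = stepU φ lam s (u n) (v n))
    (hv : ∀ n, v (n + 1) = stepV φ lam s (u n) (v n))
    (hu₀ : ∀ j, u 0 j ∈ Icc α β) (hv₀ : v 0 = fun j => φ (u 0 j)) (n : ℕ) :
    gapSum φ (u n) (v n) ≤ ENNReal.ofReal (2 * lam / s) * tvSeq (u 0) := by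
  obtain ⟨hs0, hs1⟩ := hs
  have hbox : ∀ n, KinBox φ lam α β (u n) (v n) := by
    intro n
    induction n with
    | zero => rw [hv₀]; exact kinBox_equilibrium hLip hu₀
    | succ n ih => rw [hu, hv]; exact kinBox_step hLip hlam hs0.le hs1 ih
  have hmem : ∀ n j, u n j ∈ Icc α β := fun n => mem_Icc_of_kinBox hlam (hbox n)
  have hrelax : ∀ n,
      kinTV lam (u n) (relaxV φ s (u n) (v n)) ≤ ENNReal.ofReal lam * tvSeq (u 0) := by
    intro n
    refine (kinTV_relaxV_le hLip hlam.le hs0.le hs1 (hmem n)).trans ?_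
    induction n with
    | zero => rw [hv₀, kinTV_equilibrium hLip hlam.le hu₀]
    | succ n ih =>
      rw [hu, hv, kinTV_step hlam.ne']
      exact (kinTV_relaxV_le hLip hlam.le hs0.le hs1 (hmem n)).trans ih
  induction n with
  | zero => simp [gapSum, hv₀]
  | succ n ih =>
    have hstep := gapSum_step_le hLip hlam hs1 (hmem n) (by rw [← hu]; exact hmem (n + 1))
    rw [hu, hv]
    calc _ ≤ _ := hstep
      _ ≤ ENNReal.ofReal (1 - s) * (ENNReal.ofReal (2 * lam / s) * tvSeq (u 0))
          + 2 * (ENNReal.ofReal lam * tvSeq (u 0)) := by gcongr; exact hrelax n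
      _ = (ENNReal.ofReal (1 - s) * ENNReal.ofReal (2 * lam / s) + 2 * ENNReal.ofReal lam)
          * tvSeq (u 0) := by ring
      _ = _ := by rw [ofReal_one_sub_mul_add_two_mul_eq hlam.le hs0 hs1]

end Scheme

end D1Q2

end

theorem stmt8_general (flux : ℝ → ℝ) (hflux : ContDiff ℝ 1 flux)
    (α β M lam s dx : ℝ) (hlampos : 0 < lam)
    (hs : s ∈ Set.Ioc (0 : ℝ) 1)
    (hM : ∀ ξ ∈ Set.Icc α β, |deriv flux ξ| ≤ M) (hlam : M ≤ lam)
    (u v : ℕ → ℤ → ℝ)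
    (hrecu : ∀ n j, u (n + 1) j =
      (1 / 2) * (u n (j + 1) + u n (j - 1))
      - (1 / (2 * lam)) * (((1 - s) * v n (j + 1) + s * flux (u n (j + 1)))
          - ((1 - s) * v n (j - 1) + s * flux (u n (j - 1)))))
    (hrecv : ∀ n j, v (n + 1) j =
      (1 / 2) * (((1 - s) * v n (j + 1) + s * flux (u n (j + 1)))
          + ((1 - s) * v n (j - 1) + s * flux (u n (j - 1))))
      - (lam / 2) * (u n (j + 1) - u n (j - 1)))
    (hinit : ∀ j, u 0 j ∈ Set.Icc α β)
    (hinitv : ∀ j, v 0 j = flux (u 0 j)) :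
    ∀ n : ℕ,
      ENNReal.ofReal dx * (∑' j : ℤ, ENNReal.ofReal |flux (u n j) - v n j|) ≤
        ENNReal.ofReal (2 * lam * dx / s) * tvSeq (u 0) := by
  intro n
  have hLip : ∀ a ∈ Icc α β, ∀ b ∈ Icc α β, |flux b - flux a| ≤ lam * |b - a| :=
    fun a ha b hb => by
      simpa only [Real.norm_eq_abs] using (convex_Icc α β).norm_image_sub_le_of_norm_deriv_le
        (fun x _ => (hflux.differentiable one_ne_zero).differentiableAt)
        (fun x hx => (hM x hx).trans hlam) ha hb
  have hgap := D1Q2.gapSum_le hLip hlampos hs (fun n => funext (hrecu n))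
    (fun n => funext (hrecv n)) hinit (funext hinitv) n
  calc _ ≤ ENNReal.ofReal dx * (ENNReal.ofReal (2 * lam / s) * tvSeq (u 0)) := by
        gcongr; exact hgap
    _ = _ := by
        rw [← mul_assoc, ← ENNReal.ofReal_mul' (div_nonneg (by linarith) hs.1.le)]
        ring_nf

/-- Estimation of the discrete equilibrium gap for the D1Q2 scheme in moment form. -/
theorem stmt8 (flux : ℝ → ℝ) (hflux : ContDiff ℝ 1 flux)
    (α β M lam s dx dt : ℝ) (hαβ : α ≤ β) (hlampos : 0 < lam)
    (hs : s ∈ Set.Ioc (0 : ℝ) 1)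
    (hM : ∀ ξ ∈ Set.Icc α β, |deriv flux ξ| ≤ M) (hlam : M ≤ lam)
    (hdt : 0 < dt) (hdx : dx = lam * dt)
    (u v : ℕ → ℤ → ℝ)
    (hrecu : ∀ n j, u (n + 1) j =
      (1 / 2) * (u n (j + 1) + u n (j - 1))
      - (1 / (2 * lam)) * (((1 - s) * v n (j + 1) + s * flux (u n (j + 1)))
          - ((1 - s) * v n (j - 1) + s * flux (u n (j - 1)))))
    (hrecv : ∀ n j, v (n + 1) j =
      (1 / 2) * (((1 - s) * v n (j + 1) + s * flux (u n (j + 1)))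
          + ((1 - s) * v n (j - 1) + s * flux (u n (j - 1))))
      - (lam / 2) * (u n (j + 1) - u n (j - 1)))
    (hinit : ∀ j, u 0 j ∈ Set.Icc α β)
    (hinitv : ∀ j, v 0 j = flux (u 0 j))
    (hTV0 : tvSeq (u 0) < ⊤) :
    ∀ n : ℕ,
      ENNReal.ofReal dx * (∑' j : ℤ, ENNReal.ofReal |flux (u n j) - v n j|) ≤
        ENNReal.ofReal (2 * lam * dx / s) * tvSeq (u 0) :=
  stmt8_general flux hflux α β M lam s dx hlampos hs hM hlam u v hrecu hrecv hinit hinitv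
end

section
/- In the D1Q2 scheme with equilibrium initial data f^±_j^0 = h^±(u_j^0), the first time increments satisfy |f⁺_j^1 − f⁺_j^0| ≤ |u_{j−1}^0 − u_j^0| and |f⁻_j^1 − f⁻_j^0| ≤ |u_{j+1}^0 − u_j^0| for every j ∈ ℤ, assuming λ ≥ M and u_j^0 ∈ [α,β] for all j. -/
/-! Starting from equilibrium, one step of the scheme gives `f⁺_j^1 = h⁺(u_{j-1}^0)` and
`f⁻_j^1 = h⁻(u_{j+1}^0)`, whatever the relaxation parameter `s`. So both increments are
increments of `h^±`, and `h^± = (λ ξ ± φ(ξ)) / (2λ)` is 1-Lipschitz on `[α, β]` because `φ` is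
`M`-Lipschitz there with `M ≤ λ`. -/

theorem abs_add_div_two_mul_le {lam a b : ℝ} (hlam : 0 < lam) (hb : |b| ≤ lam * |a|) :
    |(lam * a + b) / (2 * lam)| ≤ |a| := by
  have h2lam : 0 < 2 * lam := by linarith
  rw [abs_div, abs_of_pos h2lam, div_le_iff₀ h2lam]
  calc |lam * a + b| ≤ |lam * a| + |b| := abs_add_le _ _
    _ ≤ |a| * (2 * lam) := by rw [abs_mul, abs_of_pos hlam]; linarith

section Equilibria

variable {lam : ℝ} {flux : ℝ → ℝ} {x y : ℝ}

theorem abs_hp_sub_hp_le (hlam : 0 < lam) (hflux : |flux x - flux y| ≤ lam * |x - y|) :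
    |hp lam flux x - hp lam flux y| ≤ |x - y| := by
  have h : hp lam flux x - hp lam flux y = (lam * (x - y) + (flux x - flux y)) / (2 * lam) := by
    unfold hp; ring
  exact h ▸ abs_add_div_two_mul_le hlam hflux

theorem abs_hm_sub_hm_le (hlam : 0 < lam) (hflux : |flux x - flux y| ≤ lam * |x - y|) :
    |hm lam flux x - hm lam flux y| ≤ |x - y| := by
  have h : hm lam flux x - hm lam flux y = (lam * (x - y) + -(flux x - flux y)) / (2 * lam) := by
    unfold hm; ring
  exact h ▸ abs_add_div_two_mul_le hlam (by rwa [abs_neg])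

end Equilibria

theorem stmt9_general (flux : ℝ → ℝ) (hflux : ContDiff ℝ 1 flux)
    (α β M lam s : ℝ) (hlampos : 0 < lam)
    (hM : ∀ ξ ∈ Set.Icc α β, |deriv flux ξ| ≤ M) (hlam : M ≤ lam)
    (fp fm u : ℕ → ℤ → ℝ)
    (hrecp : ∀ n j, fp (n + 1) j = (1 - s) * fp n (j - 1) + s * hp lam flux (u n (j - 1)))
    (hrecm : ∀ n j, fm (n + 1) j = (1 - s) * fm n (j + 1) + s * hm lam flux (u n (j + 1)))
    (hinit : ∀ j, u 0 j ∈ Set.Icc α β)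
    (hinitp : ∀ j, fp 0 j = hp lam flux (u 0 j))
    (hinitm : ∀ j, fm 0 j = hm lam flux (u 0 j)) :
    ∀ j : ℤ,
      |fp 1 j - fp 0 j| ≤ |u 0 (j - 1) - u 0 j| ∧
      |fm 1 j - fm 0 j| ≤ |u 0 (j + 1) - u 0 j| := by
  have hlip : ∀ i k, |flux (u 0 i) - flux (u 0 k)| ≤ lam * |u 0 i - u 0 k| := fun i k =>
    calc |flux (u 0 i) - flux (u 0 k)| ≤ M * |u 0 i - u 0 k| :=
          (convex_Icc α β).norm_image_sub_le_of_norm_deriv_le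
            (fun z _ => hflux.differentiable one_ne_zero z) hM (hinit k) (hinit i)
      _ ≤ lam * |u 0 i - u 0 k| := by gcongr
  intro j
  have hp_step : fp 1 j = hp lam flux (u 0 (j - 1)) := by rw [hrecp 0 j, hinitp (j - 1)]; ring
  have hm_step : fm 1 j = hm lam flux (u 0 (j + 1)) := by rw [hrecm 0 j, hinitm (j + 1)]; ring
  rw [hp_step, hm_step, hinitp, hinitm]
  exact ⟨abs_hp_sub_hp_le hlampos (hlip _ _), abs_hm_sub_hm_le hlampos (hlip _ _)⟩

/-- First time increments of the D1Q2 scheme with equilibrium initial data. -/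
theorem stmt9 (flux : ℝ → ℝ) (hflux : ContDiff ℝ 1 flux)
    (α β M lam s : ℝ) (hαβ : α ≤ β) (hlampos : 0 < lam)
    (hM : ∀ ξ ∈ Set.Icc α β, |deriv flux ξ| ≤ M) (hlam : M ≤ lam)
    (fp fm u : ℕ → ℤ → ℝ)
    (hu : ∀ n j, u n j = fp n j + fm n j)
    (hrecp : ∀ n j, fp (n + 1) j = (1 - s) * fp n (j - 1) + s * hp lam flux (u n (j - 1)))
    (hrecm : ∀ n j, fm (n + 1) j = (1 - s) * fm n (j + 1) + s * hm lam flux (u n (j + 1)))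
    (hinit : ∀ j, u 0 j ∈ Set.Icc α β)
    (hinitp : ∀ j, fp 0 j = hp lam flux (u 0 j))
    (hinitm : ∀ j, fm 0 j = hm lam flux (u 0 j)) :
    ∀ j : ℤ,
      |fp 1 j - fp 0 j| ≤ |u 0 (j - 1) - u 0 j| ∧
      |fm 1 j - fm 0 j| ≤ |u 0 (j + 1) - u 0 j| :=
  stmt9_general flux hflux α β M lam s hlampos hM hlam fp fm u hrecp hrecm hinit hinitp hinitm
end
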